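/- arXiv:2109.01787 — 6 statements merged into one kernel-verified Lean document; each statement's English description precedes it below -/
import Mathlib

section
/- Let A = [[0,0,-t⁻¹],[0,-t,-t⁻¹+t],[-1,0,-t⁻¹+1]], B = [[-t⁻¹,1,0],[0,1,0],[0,1,-t]], and T = [[-1,1,0],[-1,0,1],[-1,0,0]] be matrices over ℤ[t,t⁻¹]. Then A = T B T⁻¹, A⁻¹ = T⁻¹ B T, and B⁻¹ = T² B T². -/
open LaurentPolynomial

/-- `t` in the Laurent polynomial ring `ℤ[t,t⁻¹]`. -/
noncomputable def tt : LaurentPolynomial ℤ := T 1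

/-- `t⁻¹` in the Laurent polynomial ring `ℤ[t,t⁻¹]`. -/
noncomputable def tinv : LaurentPolynomial ℤ := T (-1)

/-- The reduced Burau image `A` of `α = σ₁σ₂σ₃⁻¹σ₁σ₂⁻¹σ₁⁻¹`. -/
noncomputable def A : Matrix (Fin 3) (Fin 3) (LaurentPolynomial ℤ) :=
  !![0, 0, -tinv; 0, -tt, -tinv + tt; -1, 0, -tinv + 1]

/-- The reduced Burau image `B` of `β = σ₃σ₁⁻¹`. -/
noncomputable def B : Matrix (Fin 3) (Fin 3) (LaurentPolynomial ℤ) :=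
  !![-tinv, 1, 0; 0, 1, 0; 0, 1, -tt]

/-- The order-four integer matrix `T`. -/
noncomputable def Tmat : Matrix (Fin 3) (Fin 3) (LaurentPolynomial ℤ) :=
  !![-1, 1, 0; -1, 0, 1; -1, 0, 0]

/-! Since `T⁴ = 1`, `T⁻¹ = T³`. The first relation is the intertwining `A T = T B`, an identity
in the matrix entries that holds without using `t t⁻¹ = 1`. The third says that `B T²` is an
involution. The second then follows formally: `A⁻¹ = T B⁻¹ T⁻¹ = T³ B T⁵ = T⁻¹ B T`. -/

theorem tinv_mul_tt : tinv * tt = 1 := by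
  rw [tt, tinv, ← T_add, neg_add_cancel, T_zero]

theorem Tmat_pow_four : Tmat ^ 4 = 1 := by
  simp only [Tmat, pow_succ, pow_zero, one_mul, Matrix.mul_fin_three, Matrix.one_fin_three]
  norm_num

theorem A_mul_Tmat : A * Tmat = Tmat * B := by
  simp only [A, B, Tmat, Matrix.mul_fin_three]
  ring_nf

theorem B_mul_Tmat_sq_mul_self : B * Tmat ^ 2 * (B * Tmat ^ 2) = 1 := by
  simp only [B, Tmat, sq, Matrix.mul_fin_three, Matrix.one_fin_three]
  ring_nf
  simp only [tinv_mul_tt, sub_self]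

section
variable {M : Type*} [Monoid M] {a b t : M}

theorem eq_mul_mul_pow_three_of_mul_eq_mul (ht : t ^ 4 = 1) (hab : a * t = t * b) :
    a = t * b * t ^ 3 := by
  rw [← hab, mul_assoc, ← pow_succ', ht, mul_one]

theorem mul_pow_three_mul_mul_eq_one (ht : t ^ 4 = 1) (hab : a * t = t * b)
    (hb : b * t ^ 2 * (b * t ^ 2) = 1) : a * (t ^ 3 * b * t) = 1 := by
  have h6 : t ^ 3 * t ^ 3 = t ^ 2 := by
    rw [← pow_add, show 3 + 3 = 2 + 4 from rfl, pow_add, ht, mul_one]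
  have h5 : t ^ 2 * t ^ 3 = t := by
    rw [← pow_add, show 2 + 3 = 1 + 4 from rfl, pow_add, ht, mul_one, pow_one]
  calc a * (t ^ 3 * b * t)
      = t * b * (t ^ 3 * t ^ 3) * b * t := by
        rw [eq_mul_mul_pow_three_of_mul_eq_mul ht hab]; simp only [mul_assoc]
    _ = t * (b * t ^ 2 * (b * t ^ 2)) * t ^ 3 := by
        rw [h6]; simp only [mul_assoc, h5]
    _ = 1 := by rw [hb, mul_one, ← pow_succ', ht]

end

/-- `A = T B T⁻¹`, `A⁻¹ = T⁻¹ B T`, and `B⁻¹ = T² B T²`. -/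
theorem conjugation_relations :
    A = Tmat * B * Tmat⁻¹ ∧ A⁻¹ = Tmat⁻¹ * B * Tmat ∧ B⁻¹ = Tmat ^ 2 * B * Tmat ^ 2 := by
  have hTinv : Tmat⁻¹ = Tmat ^ 3 :=
    Matrix.inv_eq_right_inv (by rw [← pow_succ', Tmat_pow_four])
  rw [hTinv]
  refine ⟨eq_mul_mul_pow_three_of_mul_eq_mul Tmat_pow_four A_mul_Tmat,
    Matrix.inv_eq_right_inv ?_, Matrix.inv_eq_right_inv ?_⟩
  · exact mul_pow_three_mul_mul_eq_one Tmat_pow_four A_mul_Tmat B_mul_Tmat_sq_mul_self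
  · simpa only [mul_assoc] using B_mul_Tmat_sq_mul_self
end

section
/- Let G be a group and s₁, s₂, s₃ ∈ G satisfy the B₄ braid relations. Then α = τ⁻¹βτ, where α = s₁s₂s₃⁻¹s₁s₂⁻¹s₁⁻¹, β = s₃s₁⁻¹, and τ = s₁s₂s₃. -/
theorem mul_mul_inv_eq_inv_mul_mul_of_braid {G : Type*} [Group G] {a b : G}
    (h : a * b * a = b * a * b) : b * a * b⁻¹ = a⁻¹ * b * a :=
  calc b * a * b⁻¹ = a⁻¹ * (a * b * a) * b⁻¹ := by group
    _ = a⁻¹ * b * a := by rw [h]; group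

/-- If `s₁, s₂, s₃` satisfy the `B₄` braid relations, then `α = τ⁻¹βτ` where
`α = s₁s₂s₃⁻¹s₁s₂⁻¹s₁⁻¹`, `β = s₃s₁⁻¹`, `τ = s₁s₂s₃`. -/
theorem alpha_eq_tau_inv_beta_tau {G : Type*} [Group G] (s₁ s₂ s₃ : G)
    (h₁₂ : s₁ * s₂ * s₁ = s₂ * s₁ * s₂)
    (h₂₃ : s₂ * s₃ * s₂ = s₃ * s₂ * s₃)
    (h₁₃ : s₁ * s₃ = s₃ * s₁) :
    s₁ * s₂ * s₃⁻¹ * s₁ * s₂⁻¹ * s₁⁻¹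
      = (s₁ * s₂ * s₃)⁻¹ * (s₃ * s₁⁻¹) * (s₁ * s₂ * s₃) := by
  -- Since `βτ = s₃s₂s₃`, the claim is `τα = s₃s₂s₃`; multiply it on the right by `s₁s₂`.
  suffices key : s₁ * s₂ * s₃ * s₁ * s₂ * s₃⁻¹ * s₁ = s₃ * s₂ * s₃ * s₁ * s₂ by
    calc _ = (s₁ * s₂ * s₃)⁻¹ * (s₁ * s₂ * s₃ * s₁ * s₂ * s₃⁻¹ * s₁) * (s₁ * s₂)⁻¹ := by group
      _ = _ := by rw [key]; group
  have h₃₂ : s₃ * s₂ * s₃⁻¹ = s₂⁻¹ * s₃ * s₂ := mul_mul_inv_eq_inv_mul_mul_of_braid h₂₃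
  calc s₁ * s₂ * s₃ * s₁ * s₂ * s₃⁻¹ * s₁
      = s₁ * s₂ * (s₁ * s₃) * s₂ * s₃⁻¹ * s₁ := by rw [h₁₃]; group
    _ = s₁ * s₂ * s₁ * (s₂⁻¹ * s₃ * s₂) * s₁ := by rw [← h₃₂]; group
    _ = s₂ * s₁ * (s₃ * s₂ * s₁) := by rw [h₁₂]; group
    _ = s₂ * (s₃ * s₁) * s₂ * s₁ := by rw [← h₁₃]; group
    _ = s₂ * s₃ * (s₂ * s₁ * s₂) := by rw [← h₁₂]; group
    _ = s₃ * s₂ * s₃ * s₁ * s₂ := by rw [← h₂₃]; group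
end

section
/- Let G be a group and s₁, s₂, s₃ ∈ G satisfy the B₄ braid relations. Then α⁻¹ = τβτ⁻¹, where α = s₁s₂s₃⁻¹s₁s₂⁻¹s₁⁻¹, β = s₃s₁⁻¹, and τ = s₁s₂s₃. -/
theorem alpha_inv_eq_tau_beta_tau_inv_general {G : Type*} [Group G] (s₁ s₂ s₃ : G)
    (h₁₃ : s₁ * s₃ = s₃ * s₁) :
    (s₁ * s₂ * s₃⁻¹ * s₁ * s₂⁻¹ * s₁⁻¹)⁻¹
      = (s₁ * s₂ * s₃) * (s₃ * s₁⁻¹) * (s₁ * s₂ * s₃)⁻¹ := by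
  have h : Commute s₃ s₁⁻¹ := Commute.inv_right (Commute.symm h₁₃)
  calc (s₁ * s₂ * s₃⁻¹ * s₁ * s₂⁻¹ * s₁⁻¹)⁻¹
      = s₁ * s₂ * (s₁⁻¹ * s₃) * (s₁ * s₂)⁻¹ := by group
    _ = s₁ * s₂ * (s₃ * (s₃ * s₁⁻¹) * s₃⁻¹) * (s₁ * s₂)⁻¹ := by
      rw [((Commute.refl s₃).mul_right h).mul_inv_cancel, h.eq]
    _ = (s₁ * s₂ * s₃) * (s₃ * s₁⁻¹) * (s₁ * s₂ * s₃)⁻¹ := by group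

/-- If `s₁, s₂, s₃` satisfy the `B₄` braid relations, then `α⁻¹ = τβτ⁻¹` where
`α = s₁s₂s₃⁻¹s₁s₂⁻¹s₁⁻¹`, `β = s₃s₁⁻¹`, `τ = s₁s₂s₃`. -/
theorem alpha_inv_eq_tau_beta_tau_inv {G : Type*} [Group G] (s₁ s₂ s₃ : G)
    (h₁₂ : s₁ * s₂ * s₁ = s₂ * s₁ * s₂)
    (h₂₃ : s₂ * s₃ * s₂ = s₃ * s₂ * s₃)
    (h₁₃ : s₁ * s₃ = s₃ * s₁) :
    (s₁ * s₂ * s₃⁻¹ * s₁ * s₂⁻¹ * s₁⁻¹)⁻¹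
      = (s₁ * s₂ * s₃) * (s₃ * s₁⁻¹) * (s₁ * s₂ * s₃)⁻¹ :=
  alpha_inv_eq_tau_beta_tau_inv_general s₁ s₂ s₃ h₁₃
end

section
/- Let G be a group and s₁, s₂, s₃ ∈ G satisfy the B₄ braid relations. Then β⁻¹ = τ²βτ⁻², where β = s₃s₁⁻¹ and τ = s₁s₂s₃. -/
/-!
Conjugation by `τ = s₁s₂s₃` shifts the generators, `τ s₁ τ⁻¹ = s₂` and `τ s₂ τ⁻¹ = s₃`.
Because `τ` is itself the product `s₁s₂s₃` of the shifted generators, this forces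
conjugation by `τ²` to swap `s₁` and `s₃`, so it sends `β = s₃s₁⁻¹` to `s₁s₃⁻¹ = β⁻¹`.
-/

section Monoid

variable {M : Type*} [Monoid M]

theorem SemiconjBy.sq_of_eq_mul_mul {a x y z : M} (ha : a = x * y * z)
    (hxy : SemiconjBy a x y) (hyz : SemiconjBy a y z) : SemiconjBy (a ^ 2) z x :=
  calc a ^ 2 * z = x * y * z * a * z := by rw [← ha, pow_two]
    _ = x * y * (a * y) * z := by rw [hyz.eq]; simp only [mul_assoc]
    _ = x * (a * x) * y * z := by rw [hxy.eq]; simp only [mul_assoc]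
    _ = x * a ^ 2 := by rw [pow_two]; nth_rw 3 [ha]; simp only [mul_assoc]

theorem semiconjBy_mul_mul_of_braid₁₂ {s₁ s₂ s₃ : M} (h₁₂ : s₁ * s₂ * s₁ = s₂ * s₁ * s₂)
    (h₁₃ : Commute s₁ s₃) : SemiconjBy (s₁ * s₂ * s₃) s₁ s₂ :=
  calc s₁ * s₂ * s₃ * s₁ = s₁ * s₂ * (s₃ * s₁) := by simp only [mul_assoc]
    _ = s₁ * s₂ * s₁ * s₃ := by rw [← h₁₃.eq, ← mul_assoc]
    _ = s₂ * s₁ * s₂ * s₃ := by rw [h₁₂]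
    _ = s₂ * (s₁ * s₂ * s₃) := by simp only [mul_assoc]

theorem semiconjBy_mul_mul_of_braid₂₃ {s₁ s₂ s₃ : M} (h₂₃ : s₂ * s₃ * s₂ = s₃ * s₂ * s₃)
    (h₁₃ : Commute s₁ s₃) : SemiconjBy (s₁ * s₂ * s₃) s₂ s₃ :=
  calc s₁ * s₂ * s₃ * s₂ = s₁ * (s₂ * s₃ * s₂) := by simp only [mul_assoc]
    _ = s₁ * s₃ * (s₂ * s₃) := by rw [h₂₃]; simp only [mul_assoc]
    _ = s₃ * s₁ * (s₂ * s₃) := by rw [h₁₃.eq]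
    _ = s₃ * (s₁ * s₂ * s₃) := by simp only [mul_assoc]

end Monoid

/-- If `s₁, s₂, s₃` satisfy the `B₄` braid relations, then `β⁻¹ = τ²βτ⁻²` where
`β = s₃s₁⁻¹` and `τ = s₁s₂s₃`. -/
theorem beta_inv_eq_tau_sq_beta_tau_inv_sq {G : Type*} [Group G] (s₁ s₂ s₃ : G)
    (h₁₂ : s₁ * s₂ * s₁ = s₂ * s₁ * s₂)
    (h₂₃ : s₂ * s₃ * s₂ = s₃ * s₂ * s₃)
    (h₁₃ : s₁ * s₃ = s₃ * s₁) :
    (s₃ * s₁⁻¹)⁻¹ = (s₁ * s₂ * s₃) ^ 2 * (s₃ * s₁⁻¹) * ((s₁ * s₂ * s₃) ^ 2)⁻¹ := by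
  have shift₁₂ := semiconjBy_mul_mul_of_braid₁₂ h₁₂ h₁₃
  have shift₂₃ := semiconjBy_mul_mul_of_braid₂₃ h₂₃ h₁₃
  have swap₁₃ : SemiconjBy ((s₁ * s₂ * s₃) ^ 2) s₁ s₃ := by
    rw [pow_two]; exact shift₂₃.mul_left shift₁₂
  have swap₃₁ : SemiconjBy ((s₁ * s₂ * s₃) ^ 2) s₃ s₁ :=
    SemiconjBy.sq_of_eq_mul_mul rfl shift₁₂ shift₂₃
  have inverts : SemiconjBy ((s₁ * s₂ * s₃) ^ 2) (s₃ * s₁⁻¹) (s₃ * s₁⁻¹)⁻¹ := by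
    rw [mul_inv_rev, inv_inv]; exact swap₃₁.mul_right swap₁₃.inv_right
  rw [eq_mul_inv_iff_mul_eq]
  exact inverts.eq.symm
end

section
/- Let G be a group and s₁, s₂, s₃ ∈ G satisfy the B₄ braid relations. Then the subgroup generated by α = s₁s₂s₃⁻¹s₁s₂⁻¹s₁⁻¹ and β = s₃s₁⁻¹ is contained in the subgroup generated by τ = s₁s₂s₃ and Δ = s₁s₂s₃s₁s₂s₁. -/
/-!
Write `τ = s₁s₂s₃` and `Δ = s₁s₂s₃s₁s₂s₁ = τ · s₁s₂s₁`. The braid relations give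
`τ s₁ = s₂ τ` and `τ s₂ = s₃ τ`, so `Δ = s₃s₂s₃ τ = (s₃s₁⁻¹) τ²`. On the other hand
`α τ = s₁s₂ (s₃⁻¹s₁s₃) = s₁s₂s₁`, so `Δ = τ α τ`. Hence `α = τ⁻¹Δτ⁻¹` and `β = Δτ⁻²`.
-/

section BraidB4

variable {G : Type*} [Group G] {s₁ s₂ s₃ : G}

theorem braid_tau_mul_s₁ (h₁₂ : s₁ * s₂ * s₁ = s₂ * s₁ * s₂) (h₁₃ : Commute s₁ s₃) :
    s₁ * s₂ * s₃ * s₁ = s₂ * (s₁ * s₂ * s₃) := by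
  rw [mul_assoc _ s₃, ← h₁₃.eq, ← mul_assoc, h₁₂]
  simp only [mul_assoc]

theorem braid_tau_mul_s₂ (h₂₃ : s₂ * s₃ * s₂ = s₃ * s₂ * s₃) (h₁₃ : Commute s₁ s₃) :
    s₁ * s₂ * s₃ * s₂ = s₃ * (s₁ * s₂ * s₃) := by
  simp only [mul_assoc] at h₂₃ ⊢
  rw [h₂₃, ← mul_assoc s₁, h₁₃.eq]
  simp only [mul_assoc]

theorem braid_delta_eq_beta_mul_tau_sq (h₁₂ : s₁ * s₂ * s₁ = s₂ * s₁ * s₂)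
    (h₂₃ : s₂ * s₃ * s₂ = s₃ * s₂ * s₃) (h₁₃ : Commute s₁ s₃) :
    s₁ * s₂ * s₃ * s₁ * s₂ * s₁ = s₃ * s₁⁻¹ * (s₁ * s₂ * s₃) ^ 2 := by
  calc s₁ * s₂ * s₃ * s₁ * s₂ * s₁
      = s₂ * (s₁ * s₂ * s₃ * s₂) * s₁ := by rw [braid_tau_mul_s₁ h₁₂ h₁₃]; simp only [mul_assoc]
    _ = s₂ * s₃ * (s₁ * s₂ * s₃ * s₁) := by rw [braid_tau_mul_s₂ h₂₃ h₁₃]; simp only [mul_assoc]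
    _ = s₃ * s₂ * s₃ * (s₁ * s₂ * s₃) := by
      rw [braid_tau_mul_s₁ h₁₂ h₁₃, ← h₂₃]; simp only [mul_assoc]
    _ = s₃ * s₁⁻¹ * (s₁ * s₂ * s₃) ^ 2 := by simp only [sq, mul_assoc, inv_mul_cancel_left]

theorem braid_delta_eq_tau_mul_alpha_mul_tau (h₁₃ : Commute s₁ s₃) :
    s₁ * s₂ * s₃ * s₁ * s₂ * s₁ =
      s₁ * s₂ * s₃ * (s₁ * s₂ * s₃⁻¹ * s₁ * s₂⁻¹ * s₁⁻¹) * (s₁ * s₂ * s₃) := by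
  have h : s₃⁻¹ * s₁ * s₃ = s₁ := by rw [mul_assoc, h₁₃.eq, inv_mul_cancel_left]
  calc s₁ * s₂ * s₃ * s₁ * s₂ * s₁
      = s₁ * s₂ * s₃ * (s₁ * s₂ * (s₃⁻¹ * s₁ * s₃)) := by rw [h]; simp only [mul_assoc]
    _ = _ := by group

end BraidB4

/-- If `s₁, s₂, s₃` satisfy the `B₄` braid relations, then the subgroup generated
by `α = s₁s₂s₃⁻¹s₁s₂⁻¹s₁⁻¹` and `β = s₃s₁⁻¹` is contained in the subgroup
generated by `τ = s₁s₂s₃` and `Δ = s₁s₂s₃s₁s₂s₁`. -/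
theorem closure_alpha_beta_le_closure_tau_Delta {G : Type*} [Group G] (s₁ s₂ s₃ : G)
    (h₁₂ : s₁ * s₂ * s₁ = s₂ * s₁ * s₂)
    (h₂₃ : s₂ * s₃ * s₂ = s₃ * s₂ * s₃)
    (h₁₃ : s₁ * s₃ = s₃ * s₁) :
    Subgroup.closure ({s₁ * s₂ * s₃⁻¹ * s₁ * s₂⁻¹ * s₁⁻¹, s₃ * s₁⁻¹} : Set G)
      ≤ Subgroup.closure ({s₁ * s₂ * s₃, s₁ * s₂ * s₃ * s₁ * s₂ * s₁} : Set G) := by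
  set H := Subgroup.closure ({s₁ * s₂ * s₃, s₁ * s₂ * s₃ * s₁ * s₂ * s₁} : Set G)
  have hτ : s₁ * s₂ * s₃ ∈ H := Subgroup.subset_closure (Set.mem_insert _ _)
  have hΔ : s₁ * s₂ * s₃ * s₁ * s₂ * s₁ ∈ H :=
    Subgroup.subset_closure (Set.mem_insert_of_mem _ rfl)
  have hα : s₁ * s₂ * s₃⁻¹ * s₁ * s₂⁻¹ * s₁⁻¹ =
      (s₁ * s₂ * s₃)⁻¹ * (s₁ * s₂ * s₃ * s₁ * s₂ * s₁) * (s₁ * s₂ * s₃)⁻¹ := by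
    rw [braid_delta_eq_tau_mul_alpha_mul_tau h₁₃]; group
  have hβ : s₃ * s₁⁻¹ = (s₁ * s₂ * s₃ * s₁ * s₂ * s₁) * ((s₁ * s₂ * s₃) ^ 2)⁻¹ := by
    rw [braid_delta_eq_beta_mul_tau_sq h₁₂ h₂₃ h₁₃, mul_inv_cancel_right]
  rw [Subgroup.closure_le, Set.insert_subset_iff, Set.singleton_subset_iff, SetLike.mem_coe,
    SetLike.mem_coe, hα, hβ]
  exact ⟨H.mul_mem (H.mul_mem (H.inv_mem hτ) hΔ) (H.inv_mem hτ),
    H.mul_mem hΔ (H.inv_mem (H.pow_mem hτ 2))⟩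
end

section
/- Let B₄ be the presented group on generators σ₁, σ₂, σ₃ with relations σ₁σ₂σ₁ = σ₂σ₁σ₂, σ₂σ₃σ₂ = σ₃σ₂σ₃, σ₁σ₃ = σ₃σ₁, and let ψ : B₄ → GL(3, ℤ[t,t⁻¹]) be a group homomorphism with ψ(σᵢ) equal to the reduced Burau matrix Mᵢ for i = 1, 2, 3. Assume (as established by Bigelow and Bokut–Vesnin) that the kernel of ψ is contained in the subgroup generated by α = σ₁σ₂σ₃⁻¹σ₁σ₂⁻¹σ₁⁻¹ and β = σ₃σ₁⁻¹. Then the kernel of ψ is contained in the subgroup G of B₄ generated by τ = σ₁σ₂σ₃ and Δ = σ₁σ₂σ₃σ₁σ₂σ₁. -/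
open LaurentPolynomial

/-- The braid relators of `B₄` in the free group on three generators. -/
def braidRels : Set (FreeGroup (Fin 3)) :=
  { FreeGroup.of 0 * FreeGroup.of 1 * FreeGroup.of 0 *
      (FreeGroup.of 1 * FreeGroup.of 0 * FreeGroup.of 1)⁻¹,
    FreeGroup.of 1 * FreeGroup.of 2 * FreeGroup.of 1 *
      (FreeGroup.of 2 * FreeGroup.of 1 * FreeGroup.of 2)⁻¹,
    FreeGroup.of 0 * FreeGroup.of 2 * (FreeGroup.of 2 * FreeGroup.of 0)⁻¹ }

/-- The braid group `B₄`, presented on `σ₁, σ₂, σ₃` with the braid relations. -/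
abbrev B₄ : Type := PresentedGroup braidRels

/-- The standard generators `σ₁, σ₂, σ₃` of `B₄` (indexed by `Fin 3`). -/
def σ (i : Fin 3) : B₄ := PresentedGroup.of i

/-- Reduced Burau matrix of `σ₁`. -/
noncomputable def M₁ : Matrix (Fin 3) (Fin 3) (LaurentPolynomial ℤ) :=
  !![-tt, tt, 0; 0, 1, 0; 0, 0, 1]

/-- Reduced Burau matrix of `σ₂`. -/
noncomputable def M₂ : Matrix (Fin 3) (Fin 3) (LaurentPolynomial ℤ) :=
  !![1, 0, 0; 1, -tt, tt; 0, 0, 1]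

/-- Reduced Burau matrix of `σ₃`. -/
noncomputable def M₃ : Matrix (Fin 3) (Fin 3) (LaurentPolynomial ℤ) :=
  !![1, 0, 0; 0, 1, 0; 0, 1, -tt]

/-- `α = σ₁σ₂σ₃⁻¹σ₁σ₂⁻¹σ₁⁻¹`. -/
def α : B₄ := σ 0 * σ 1 * (σ 2)⁻¹ * σ 0 * (σ 1)⁻¹ * (σ 0)⁻¹

/-- `β = σ₃σ₁⁻¹`. -/
def β : B₄ := σ 2 * (σ 0)⁻¹

/-- `τ = σ₁σ₂σ₃`. -/
def τ : B₄ := σ 0 * σ 1 * σ 2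

/-- `Δ = σ₁σ₂σ₃σ₁σ₂σ₁`. -/
def Δ : B₄ := σ 0 * σ 1 * σ 2 * σ 0 * σ 1 * σ 0

/-- `θ = τ⁴`, the full twist generating the center of `B₄`. -/
def θ : B₄ := τ ^ 4

lemma σ_zero_one_braid : σ 0 * σ 1 * σ 0 = σ 1 * σ 0 * σ 1 :=
  PresentedGroup.mk_eq_mk_of_mul_inv_mem (rels := braidRels)
    (x := FreeGroup.of 0 * FreeGroup.of 1 * FreeGroup.of 0)
    (y := FreeGroup.of 1 * FreeGroup.of 0 * FreeGroup.of 1) (.inl rfl)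

lemma σ_one_two_braid : σ 1 * σ 2 * σ 1 = σ 2 * σ 1 * σ 2 :=
  PresentedGroup.mk_eq_mk_of_mul_inv_mem (rels := braidRels)
    (x := FreeGroup.of 1 * FreeGroup.of 2 * FreeGroup.of 1)
    (y := FreeGroup.of 2 * FreeGroup.of 1 * FreeGroup.of 2) (.inr (.inl rfl))

lemma σ_zero_two_comm : σ 0 * σ 2 = σ 2 * σ 0 :=
  PresentedGroup.mk_eq_mk_of_mul_inv_mem (rels := braidRels)
    (x := FreeGroup.of 0 * FreeGroup.of 2) (y := FreeGroup.of 2 * FreeGroup.of 0) (.inr (.inr rfl))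

lemma τ_mul_α_mul_τ : τ * α * τ = Δ :=
  calc τ * α * τ = σ 0 * σ 1 * σ 2 * σ 0 * σ 1 * ((σ 2)⁻¹ * (σ 0 * σ 2)) := by
        simp only [τ, α]; group
    _ = Δ := by rw [σ_zero_two_comm, inv_mul_cancel_left]; rfl

lemma β_mul_τ_mul_τ : β * τ * τ = Δ :=
  calc β * τ * τ = σ 2 * σ 1 * σ 2 * σ 0 * σ 1 * σ 2 := by simp only [β, τ]; group
    _ = σ 1 * σ 2 * (σ 1 * σ 0 * σ 1) * σ 2 := by rw [← σ_one_two_braid]; group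
    _ = σ 1 * σ 2 * σ 0 * σ 1 * (σ 0 * σ 2) := by rw [← σ_zero_one_braid]; group
    _ = σ 1 * (σ 2 * σ 0) * σ 1 * σ 2 * σ 0 := by rw [σ_zero_two_comm]; group
    _ = σ 1 * σ 0 * (σ 2 * σ 1 * σ 2) * σ 0 := by rw [← σ_zero_two_comm]; group
    _ = σ 1 * σ 0 * σ 1 * σ 2 * σ 1 * σ 0 := by rw [← σ_one_two_braid]; group
    _ = σ 0 * σ 1 * (σ 0 * σ 2) * σ 1 * σ 0 := by rw [← σ_zero_one_braid]; group
    _ = Δ := by rw [σ_zero_two_comm]; simp only [Δ, mul_assoc]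

lemma closure_α_β_le_closure_τ_Δ :
    Subgroup.closure {α, β} ≤ Subgroup.closure ({τ, Δ} : Set B₄) := by
  have hτ : τ ∈ Subgroup.closure ({τ, Δ} : Set B₄) := Subgroup.subset_closure (.inl rfl)
  have hΔ : Δ ∈ Subgroup.closure ({τ, Δ} : Set B₄) := Subgroup.subset_closure (.inr rfl)
  rw [Subgroup.closure_le, Set.insert_subset_iff, Set.singleton_subset_iff]
  constructor
  · rw [show α = τ⁻¹ * Δ * τ⁻¹ by rw [← τ_mul_α_mul_τ]; group]
    exact mul_mem (mul_mem (inv_mem hτ) hΔ) (inv_mem hτ)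
  · rw [show β = Δ * τ⁻¹ * τ⁻¹ by rw [← β_mul_τ_mul_τ]; group]
    exact mul_mem (mul_mem hΔ (inv_mem hτ)) (inv_mem hτ)

theorem ker_burau_le_closure_tau_Delta_general
    (ψ : B₄ →* Matrix.GeneralLinearGroup (Fin 3) (LaurentPolynomial ℤ))
    (hker : ψ.ker ≤ Subgroup.closure ({α, β} : Set B₄)) :
    ψ.ker ≤ Subgroup.closure ({τ, Δ} : Set B₄) :=
  hker.trans closure_α_β_le_closure_τ_Δ

theorem ker_burau_le_closure_tau_Delta
    (ψ : B₄ →* Matrix.GeneralLinearGroup (Fin 3) (LaurentPolynomial ℤ))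
    (h₁ : (ψ (σ 0) : Matrix (Fin 3) (Fin 3) (LaurentPolynomial ℤ)) = M₁)
    (h₂ : (ψ (σ 1) : Matrix (Fin 3) (Fin 3) (LaurentPolynomial ℤ)) = M₂)
    (h₃ : (ψ (σ 2) : Matrix (Fin 3) (Fin 3) (LaurentPolynomial ℤ)) = M₃)
    (hker : ψ.ker ≤ Subgroup.closure ({α, β} : Set B₄)) :
    ψ.ker ≤ Subgroup.closure ({τ, Δ} : Set B₄) :=
  ker_burau_le_closure_tau_Delta_general ψ hker
end
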